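/- arXiv:2512.13469 — 6 statements merged into one kernel-verified Lean document; each statement's English description precedes it below -/
import Mathlib

section
/- Let R be a principal ideal domain such that for every r ∈ R, either r² ≡ 0 (mod 2) or r² ≡ u² (mod 2) for some unit u ∈ R. If 2 ∈ R is not a unit and the ideal (2) is not prime, then there exists a unique prime ideal I containing (2), and it satisfies I² = (2). -/
/-- Let `R` be a principal ideal domain such that for every `r ∈ R`,
either `r² ≡ 0 (mod 2)` or `r² ≡ u² (mod 2)` for some unit `u`. If `2` is not a unit
and `(2)` is not prime, then there is a unique prime ideal containing `(2)`, and every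
such prime ideal `I` satisfies `I² = (2)`. -/
theorem stmt_0 (R : Type*) [CommRing R] [IsDomain R] [IsPrincipalIdealRing R]
    (hsq : ∀ r : R, r ^ 2 ∈ Ideal.span {(2 : R)} ∨
      ∃ u : Rˣ, r ^ 2 - (u : R) ^ 2 ∈ Ideal.span {(2 : R)})
    (h2 : ¬ IsUnit (2 : R)) (hp : ¬ (Ideal.span {(2 : R)}).IsPrime) :
    (∃! I : Ideal R, I.IsPrime ∧ Ideal.span {(2 : R)} ≤ I) ∧
      ∀ I : Ideal R, I.IsPrime → Ideal.span {(2 : R)} ≤ I →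
        I ^ 2 = Ideal.span {(2 : R)} := by
  have h2ne : (2 : R) ≠ 0 := by
    intro h
    apply hp
    rw [h, Ideal.span_singleton_eq_bot.mpr rfl]
    exact Ideal.bot_prime
  obtain ⟨p, hpi, c, hc⟩ := WfDvdMonoid.exists_irreducible_factor h2 h2ne
  have hpp : Prime p := hpi.prime
  have hcu : ¬ IsUnit c := by
    intro hu
    apply hp
    rw [Ideal.span_singleton_prime h2ne]
    have hap : Associated p 2 := ⟨hu.unit, by rw [IsUnit.unit_spec]; exact hc.symm⟩
    exact hap.prime hpp
  -- 2 is associated to p ^ 2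
  have hassoc : Associated (p ^ 2) (2 : R) := by
    rcases hsq p with h | ⟨u, hu⟩
    · rw [Ideal.mem_span_singleton] at h
      obtain ⟨d, hd⟩ := h
      rw [hc, sq, mul_assoc] at hd
      have hcd : p = c * d := mul_left_cancel₀ hpp.ne_zero hd
      rcases hpi.isUnit_or_isUnit hcd with h1 | h1
      · exact absurd h1 hcu
      · obtain ⟨v, hv⟩ : Associated c p := ⟨h1.unit, by rw [IsUnit.unit_spec]; exact hcd.symm⟩
        have hcv : c = p * ↑v⁻¹ := by rw [← hv, mul_assoc]; simp
        exact ⟨v⁻¹, by rw [sq, mul_assoc, ← hcv, ← hc]⟩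
    · exfalso
      rw [Ideal.mem_span_singleton] at hu
      have hp2 : p ∣ p ^ 2 - (u : R) ^ 2 := dvd_trans ⟨c, hc⟩ hu
      have hdu : p ∣ (u : R) ^ 2 :=
        (dvd_sub_right (dvd_pow_self p two_ne_zero)).mp hp2
      exact hpp.not_unit (isUnit_of_dvd_unit (hpp.dvd_of_dvd_pow hdu) u.isUnit)
  have hspan : Ideal.span {p} ^ 2 = Ideal.span {(2 : R)} := by
    rw [Ideal.span_singleton_pow, Ideal.span_singleton_eq_span_singleton]
    exact hassoc
  have hIp : (Ideal.span {p}).IsPrime := (Ideal.span_singleton_prime hpp.ne_zero).mpr hpp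
  have hle : Ideal.span {(2 : R)} ≤ Ideal.span {p} :=
    Ideal.span_singleton_le_span_singleton.mpr ⟨c, hc⟩
  have huniq : ∀ I : Ideal R, I.IsPrime → Ideal.span {(2 : R)} ≤ I → I = Ideal.span {p} := by
    intro I hI hIle
    obtain ⟨g, hg⟩ := (IsPrincipalIdealRing.principal I)
    have hg' : I = Ideal.span {g} := hg
    rw [hg'] at hIle hI ⊢
    rw [Ideal.span_singleton_le_span_singleton] at hIle
    have hgne : g ≠ 0 := by
      rintro rfl
      exact h2ne (zero_dvd_iff.mp hIle)
    have hgp : Prime g := (Ideal.span_singleton_prime hgne).mp hI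
    have hgdp : g ∣ p := hgp.dvd_of_dvd_pow (hIle.trans hassoc.symm.dvd)
    rcases hpi.dvd_iff.mp hgdp with h | h
    · exact absurd h hgp.not_unit
    · rw [Ideal.span_singleton_eq_span_singleton]
      exact h.symm
  refine ⟨⟨Ideal.span {p}, ⟨hIp, hle⟩, fun I hI => huniq I hI.1 hI.2⟩, fun I hI hIle => ?_⟩
  rw [huniq I hI hIle]
  exact hspan
end

section
/- Let R be a principal ideal domain. Every metabolic non-degenerate symmetric bilinear form (M, λ) on a finitely generated free R-module is isomorphic to an orthogonal direct sum of rank-2 forms, each of which admits a unimodular isotropic vector. Conversely, any orthogonal direct sum of rank-2 non-degenerate forms each possessing a unimodular isotropic vector is metabolic. -/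
/-!
Over a PID a Lagrangian `L` of a metabolic form on a finite free module is itself free, say
with basis `b₁, …, bₙ`. Surjectivity of `M → L*` gives `fᵢ` with `B fᵢ bⱼ = δᵢⱼ`; subtracting
multiples of the `bⱼ` makes the `fᵢ` pairwise orthogonal, and `ker (M → L*) = L` shows that
the `bᵢ, fᵢ` form a basis of `M`. In it `B` is the orthogonal sum of the blocks
`!![0, 1; 1, B fᵢ fᵢ]`, each with the unimodular isotropic vector `bᵢ`.

Conversely, in a rank-2 block with unit determinant a unimodular isotropic `x` has a partner
`z` with `B x z = 1`; the Gram matrix of `x, z` has determinant `-1`, so `x, z` is a basis of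
`R²` and the orthogonal of `x` is `R x`. Hence the span of the vectors `xᵢ` of all blocks is a
Lagrangian, and the `zᵢ` split `M → L*`.
-/

/-- A vector `v` of a module is unimodular if the submodule it generates is free
on `v` and is a direct summand. -/
def Unimodular (R : Type*) [CommRing R] {M : Type*} [AddCommGroup M] [Module R M]
    (v : M) : Prop :=
  (∀ a : R, a • v = 0 → a = 0) ∧ ∃ q : Submodule R M, IsCompl (Submodule.span R {v}) q

/-- A form `B` on `M` is metabolic if it has a Lagrangian `L`: the form vanishes on
`L`, and the null-composite sequence `0 → L → M ≅ M* → L* → 0` is exact; i.e. the map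
`M → L*`, `m ↦ B m |_L`, has kernel exactly `L` and is surjective. -/
def Metabolic (R : Type*) [CommRing R] {M : Type*} [AddCommGroup M] [Module R M]
    (B : LinearMap.BilinForm R M) : Prop :=
  ∃ L : Submodule R M,
    (∀ x ∈ L, ∀ y ∈ L, B x y = 0) ∧
    LinearMap.ker ((L.subtype.dualMap).comp B) = L ∧
    Function.Surjective ((L.subtype.dualMap).comp B)

open LinearMap (BilinForm)
open Matrix

theorem Unimodular.exists_dual_apply_eq_one {R M : Type*} [CommRing R] [AddCommGroup M]
    [Module R M] {v : M} (hv : Unimodular R v) : ∃ g : Module.Dual R M, g v = 1 := by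
  obtain ⟨htors, q, hq⟩ := hv
  have hinj : Function.Injective (LinearMap.toSpanSingleton R M v) := fun a b hab =>
    sub_eq_zero.1 (htors _ (by simpa [sub_smul, sub_eq_zero] using hab))
  let coord : (R ∙ v) ≃ₗ[R] R :=
    ((LinearEquiv.ofInjective _ hinj).trans
      (LinearEquiv.ofEq _ _ (LinearMap.range_toSpanSingleton v))).symm
  refine ⟨coord.toLinearMap ∘ₗ Submodule.projectionOnto _ q hq, ?_⟩
  have hproj : Submodule.projectionOnto _ q hq v = ⟨v, Submodule.mem_span_singleton_self v⟩ :=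
    Submodule.projectionOnto_apply_left hq ⟨v, _⟩
  simp only [LinearMap.comp_apply, LinearEquiv.coe_coe, hproj, coord, LinearEquiv.symm_apply_eq]
  exact Subtype.ext (by simp)

theorem unimodular_of_dual_apply_eq_one {R M : Type*} [CommRing R] [AddCommGroup M]
    [Module R M] {v : M} (g : Module.Dual R M) (hg : g v = 1) : Unimodular R v := by
  refine ⟨fun a ha => by simpa [hg] using congrArg g ha, LinearMap.ker g, ?_, ?_⟩
  · rw [Submodule.disjoint_def]
    rintro _ hu hgu
    obtain ⟨a, rfl⟩ := Submodule.mem_span_singleton.1 hu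
    simp_all
  · rw [codisjoint_iff, eq_top_iff]
    intro m _
    exact Submodule.mem_sup.2 ⟨g m • v,
      Submodule.smul_mem _ _ (Submodule.mem_span_singleton_self v), m - g m • v, by simp [hg],
      add_sub_cancel _ _⟩

theorem Matrix.exists_toBilin'_apply_eq_one {R n : Type*} [CommRing R] [Fintype n]
    [DecidableEq n] {G : Matrix n n R} (hG : IsUnit G.det) {x : n → R}
    (hx : Unimodular R x) : ∃ z, toBilin' G x z = 1 := by
  obtain ⟨g, hg⟩ := hx.exists_dual_apply_eq_one
  refine ⟨G⁻¹ *ᵥ fun b => g (Pi.single b 1), Eq.trans ?_ hg⟩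
  rw [toBilin'_apply', mulVec_mulVec, mul_nonsing_inv _ hG, one_mulVec,
    LinearMap.pi_apply_eq_sum_univ g x]
  simp only [dotProduct, smul_eq_mul]
  congr! 3 with b
  ext j
  simp [Pi.single_apply, eq_comm]

theorem Matrix.mem_span_singleton_of_toBilin'_apply_eq_zero {R : Type*} [CommRing R]
    {G : Matrix (Fin 2) (Fin 2) R} {x z : Fin 2 → R} (hxx : toBilin' G x x = 0)
    (hxz : toBilin' G x z = 1) (hzx : toBilin' G z x = 1) {u : Fin 2 → R}
    (hu : toBilin' G u x = 0) : u ∈ R ∙ x := by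
  set P : Matrix (Fin 2) (Fin 2) R := Matrix.of ![x, z]
  have hgram :
      P * G * Pᵀ = !![toBilin' G x x, toBilin' G x z; toBilin' G z x, toBilin' G z z] := by
    ext i j
    fin_cases i <;> fin_cases j <;>
      simp [P, toBilin'_apply, mul_apply, vecMul, dotProduct, Fin.sum_univ_two] <;> ring
  have hP : IsUnit P := by
    have hdet := congrArg Matrix.det hgram
    rw [det_mul, det_mul, det_transpose, det_fin_two_of, hxx, hxz, hzx] at hdet
    rw [isUnit_iff_isUnit_det]
    exact IsUnit.of_mul_eq_one (-(G.det * P.det)) (by linear_combination -hdet)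
  obtain ⟨w, rfl⟩ : ∃ w, w ᵥ* P = u := vecMul_surjective_iff_isUnit.2 hP u
  have hw : w ᵥ* P = w 0 • x + w 1 • z := by rw [vecMul_eq_sum, Fin.sum_univ_two]; rfl
  simp only [hw, map_add, map_smul, LinearMap.add_apply, LinearMap.smul_apply, hxx, hzx,
    smul_eq_mul, mul_zero, mul_one, zero_add] at hu
  rw [hw, hu, zero_smul, add_zero]
  exact Submodule.smul_mem _ _ (Submodule.mem_span_singleton_self x)

theorem Matrix.toBilin'_apply_eq_sum {R n : Type*} [CommRing R] [Fintype n] [DecidableEq n]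
    (G : Matrix n n R) (u w : n → R) : toBilin' G u w = ∑ a, ∑ b, G a b * u a * w b := by
  rw [toBilin'_apply]
  exact Finset.sum_congr rfl fun a _ => Finset.sum_congr rfl fun b _ => by ring

theorem metabolic_of_dual_family {R M ι : Type*} [CommRing R] [AddCommGroup M] [Module R M]
    [Fintype ι] [DecidableEq ι] {B : BilinForm R M} {X Z : ι → M}
    (hXX : ∀ i j, B (X i) (X j) = 0) (hZX : ∀ i j, B (Z i) (X j) = if j = i then 1 else 0)
    (hperp : ∀ v, (∀ i, B v (X i) = 0) → v ∈ Submodule.span R (Set.range X)) :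
    Metabolic R B := by
  set L := Submodule.span R (Set.range X)
  have hXL : ∀ i, X i ∈ L := fun i => Submodule.subset_span ⟨i, rfl⟩
  have hperpL : ∀ v, (∀ i, B v (X i) = 0) → ∀ w ∈ L, B v w = 0 := fun v hv =>
    Submodule.span_le (p := LinearMap.ker (B v)).2 (Set.range_subset_iff.2 hv)
  have hiso : ∀ v ∈ L, ∀ w ∈ L, B v w = 0 := by
    intro v hv
    refine hperpL v fun i => ?_
    exact Submodule.span_le (p := LinearMap.ker (B.flip (X i))).2
      (Set.range_subset_iff.2 fun j => hXX j i) hv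
  refine ⟨L, hiso, le_antisymm (fun v hv => hperp v fun i => ?_) fun v hv => ?_, fun ℓ => ?_⟩
  · exact LinearMap.congr_fun hv ⟨X i, hXL i⟩
  · exact LinearMap.ext fun w => hiso v hv w w.2
  · refine ⟨∑ i, ℓ ⟨X i, hXL i⟩ • Z i, LinearMap.ext fun ⟨w, hw⟩ => ?_⟩
    obtain ⟨c, rfl⟩ := (Submodule.mem_span_range_iff_exists_fun R).1 hw
    have hw' : (⟨∑ i, c i • X i, hw⟩ : L) = ∑ i, c i • ⟨X i, hXL i⟩ := by
      ext; simp
    rw [hw']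
    simp only [map_sum, map_smul, LinearMap.sum_apply, LinearMap.smul_apply,
      LinearMap.comp_apply, LinearMap.dualMap_apply, Submodule.subtype_apply, hZX]
    simp

section Blocks

variable {R M ι κ : Type*} [CommRing R] [AddCommGroup M] [Module R M]
  [Fintype ι] [DecidableEq ι] [Fintype κ] [DecidableEq κ]
  {B : BilinForm R M} {G : ι → Matrix κ κ R} {e : M ≃ₗ[R] (ι × κ → R)}

theorem apply_symm_block_eq_toBilin'
    (hB : ∀ v w, B v w = ∑ i, toBilin' (G i) (fun a => e v (i, a)) (fun b => e w (i, b)))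
    (v : M) (j : ι) (u : κ → R) :
    B v (e.symm fun p => if p.1 = j then u p.2 else 0) =
      toBilin' (G j) (fun a => e v (j, a)) u := by
  rw [hB, Finset.sum_eq_single j (fun i _ hij => by simp [hij, ← Pi.zero_def]) (by simp)]
  simp

theorem metabolic_of_blocks
    (hB : ∀ v w, B v w = ∑ i, toBilin' (G i) (fun a => e v (i, a)) (fun b => e w (i, b)))
    {x z : ι → κ → R} (hxx : ∀ i, toBilin' (G i) (x i) (x i) = 0)
    (hzx : ∀ i, toBilin' (G i) (z i) (x i) = 1)
    (hperp : ∀ i u, toBilin' (G i) u (x i) = 0 → u ∈ R ∙ x i) : Metabolic R B := by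
  set X : ι → M := fun i => e.symm fun p => if p.1 = i then x i p.2 else 0
  set Z : ι → M := fun i => e.symm fun p => if p.1 = i then z i p.2 else 0
  refine metabolic_of_dual_family (X := X) (Z := Z) (fun i j => ?_) (fun i j => ?_)
    fun v hv => ?_
  · rw [apply_symm_block_eq_toBilin' hB]
    by_cases hij : j = i
    · subst hij; simpa [X] using hxx j
    · simp [X, hij, ← Pi.zero_def]
  · rw [apply_symm_block_eq_toBilin' hB]
    by_cases hij : j = i
    · subst hij; simpa [Z] using hzx j
    · simp [Z, hij, ← Pi.zero_def]
  · have hcoef : ∀ i, ∃ a : R, a • x i = fun b => e v (i, b) := fun i =>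
      Submodule.mem_span_singleton.1
        (hperp i _ (by rw [← apply_symm_block_eq_toBilin' hB]; exact hv i))
    choose a ha using hcoef
    refine (Submodule.mem_span_range_iff_exists_fun R).2 ⟨a, e.injective ?_⟩
    ext ⟨i, b⟩
    simp [X, ← congrFun (ha i) b]

end Blocks

theorem exists_orthogonal_dual_family {R M ι : Type*} [CommRing R] [AddCommGroup M]
    [Module R M] [Fintype ι] [LinearOrder ι] {B : BilinForm R M} (hB : B.IsSymm)
    {b f : ι → M} (hbb : ∀ i j, B (b i) (b j) = 0)
    (hfb : ∀ i j, B (f i) (b j) = if j = i then 1 else 0) :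
    ∃ f' : ι → M, (∀ i j, B (f' i) (b j) = if j = i then 1 else 0) ∧
      ∀ i j, i ≠ j → B (f' i) (f' j) = 0 := by
  -- each off-diagonal pairing `B (f i) (f j)` is cancelled by exactly one of the two
  -- correction terms, the one of the larger index
  set f' : ι → M := fun i => f i - ∑ j with j < i, B (f i) (f j) • b j
  have hf'b : ∀ i j, B (f' i) (b j) = if j = i then 1 else 0 := fun i j => by
    simp [f', hfb, hbb]
  have hbf : ∀ i j, B (b j) (f i) = if j = i then 1 else 0 := fun i j => by
    rw [hB.eq, hfb]
  refine ⟨f', hf'b, fun i j hij => ?_⟩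
  have hf'f : B (f' i) (f j) = B (f i) (f j) - if j < i then B (f i) (f j) else 0 := by
    simp [f', hbf, Finset.sum_ite_eq', Finset.mem_filter]
  have hf'f' : B (f' i) (f' j) = B (f' i) (f j) - if i < j then B (f j) (f i) else 0 := by
    rw [show f' j = f j - ∑ k with k < j, B (f j) (f k) • b k from rfl]
    simp [hf'b, Finset.sum_ite_eq', Finset.mem_filter]
  rw [hf'f', hf'f, hB.eq (f j)]
  rcases hij.lt_or_gt with h | h <;> simp [h, h.not_gt]

theorem exists_basis_of_lagrangian {R M ι : Type*} [CommRing R] [AddCommGroup M] [Module R M]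
    [Fintype ι] [DecidableEq ι] {B : BilinForm R M} {L : Submodule R M}
    (hker : LinearMap.ker ((L.subtype.dualMap).comp B) = L) (b : Module.Basis ι R L)
    {f : ι → M} (hfb : ∀ i j, B (f i) (b j) = if j = i then 1 else 0) :
    ∃ c : Module.Basis (ι × Fin 2) R M, ∀ i, c (i, 0) = b i ∧ c (i, 1) = f i := by
  have hbb : ∀ i j, B (b i) (b j) = 0 := fun i j =>
    LinearMap.congr_fun (hker.ge (b i).2) (b j)
  have hb : LinearIndependent R fun i => (b i : M) :=
    b.linearIndependent.map' L.subtype (Submodule.ker_subtype L)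
  set c : ι × Fin 2 → M := fun p => ![(b p.1 : M), f p.1] p.2
  have hli : LinearIndependent R c := by
    refine Fintype.linearIndependent_iff.2 fun g hg => ?_
    simp only [Fintype.sum_prod_type, Fin.sum_univ_two, c] at hg
    have hg1 : ∀ j, g (j, 1) = 0 := fun j => by
      simpa [hbb, hfb] using congrArg (fun v => B v (b j)) hg
    have hg0 : ∀ j, g (j, 0) = 0 :=
      Fintype.linearIndependent_iff.1 hb _ (by simpa [hg1] using hg)
    rintro ⟨j, a⟩
    fin_cases a
    · exact hg0 j
    · exact hg1 j
  have hsp : ⊤ ≤ Submodule.span R (Set.range c) := by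
    intro m _
    have hmL : m - ∑ i, B m (b i) • f i ∈ LinearMap.ker ((L.subtype.dualMap).comp B) :=
      LinearMap.mem_ker.2 (b.ext fun j => by simp [hfb])
    rw [hker] at hmL
    have hcb : ∀ i, (b i : M) ∈ Submodule.span R (Set.range c) := fun i =>
      Submodule.subset_span ⟨(i, 0), rfl⟩
    have hcf : ∀ i, f i ∈ Submodule.span R (Set.range c) := fun i =>
      Submodule.subset_span ⟨(i, 1), rfl⟩
    have hLc : ∀ y ∈ L, y ∈ Submodule.span R (Set.range c) := fun y hy => by
      have hy' : ∑ i, b.repr ⟨y, hy⟩ i • (b i : M) = y := by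
        simpa only [Submodule.coe_sum, Submodule.coe_smul] using
          congrArg Subtype.val (b.sum_repr ⟨y, hy⟩)
      rw [← hy']
      exact Submodule.sum_mem _ fun i _ => Submodule.smul_mem _ _ (hcb i)
    rw [← sub_add_cancel m (∑ i, B m (b i) • f i)]
    exact Submodule.add_mem _ (hLc _ hmL)
      (Submodule.sum_mem _ fun i _ => Submodule.smul_mem _ _ (hcf i))
  exact ⟨Module.Basis.mk hli hsp, fun i => by simp [c]⟩

theorem apply_eq_sum_toBilin'_of_basis {R M ι κ : Type*} [CommRing R] [AddCommGroup M]
    [Module R M] [Fintype ι] [DecidableEq ι] [Fintype κ] [DecidableEq κ] {B : BilinForm R M}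
    (c : Module.Basis (ι × κ) R M) (G : ι → Matrix κ κ R)
    (hc : ∀ i a j b, B (c (i, a)) (c (j, b)) = if i = j then G i a b else 0) (v w : M) :
    B v w =
      ∑ i, toBilin' (G i) (fun a => c.equivFun v (i, a)) (fun b => c.equivFun w (i, b)) := by
  rw [← Matrix.toBilin_toMatrix c B, Matrix.toBilin_apply]
  simp [LinearMap.BilinForm.toMatrix_apply, hc, Fintype.sum_prod_type, toBilin'_apply,
    mul_ite, ite_mul]

theorem Metabolic.exists_hyperbolic_blocks {R M : Type*} [CommRing R] [IsDomain R]
    [IsPrincipalIdealRing R] [AddCommGroup M] [Module R M] [Module.Free R M] [Module.Finite R M]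
    {B : BilinForm R M} (hB : B.IsSymm) (h : Metabolic R B) :
    ∃ (n : ℕ) (s : Fin n → R) (e : M ≃ₗ[R] (Fin n × Fin 2 → R)), ∀ v w,
      B v w = ∑ i, toBilin' !![0, 1; 1, s i] (fun a => e v (i, a)) (fun b => e w (i, b)) := by
  obtain ⟨L, hiso, hker, hsurj⟩ := h
  obtain ⟨n, b⟩ := Submodule.basisOfPid (Module.Free.chooseBasis R M) L
  have hbb : ∀ i j, B (b i) (b j) = 0 := fun i j => hiso _ (b i).2 _ (b j).2
  choose f hf using fun i => hsurj (b.coord i)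
  have hfb : ∀ i j, B (f i) (b j) = if j = i then 1 else 0 := fun i j => by
    simpa [Finsupp.single_apply] using LinearMap.congr_fun (hf i) (b j)
  obtain ⟨f', hf'b, hf'f'⟩ := exists_orthogonal_dual_family hB hbb hfb
  obtain ⟨c, hc⟩ := exists_basis_of_lagrangian hker b hf'b
  refine ⟨n, fun i => B (f' i) (f' i), c.equivFun,
    apply_eq_sum_toBilin'_of_basis c _ fun i a j a' => ?_⟩
  have hbf' : ∀ i j, B (b j) (f' i) = if j = i then 1 else 0 := fun i j => by
    rw [hB.eq, hf'b]
  by_cases hij : i = j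
  · subst hij
    fin_cases a <;> fin_cases a' <;> simp [hc, hbb, hf'b, hbf']
  · fin_cases a <;> fin_cases a' <;>
      simp [hc, hbb, hf'b, hbf', hij, Ne.symm hij, hf'f' i j hij]

theorem stmt_7_general (R : Type*) [CommRing R] [IsDomain R] [IsPrincipalIdealRing R]
    (M : Type*) [AddCommGroup M] [Module R M] [Module.Free R M] [Module.Finite R M]
    (B : LinearMap.BilinForm R M) (hsymm : B.IsSymm) :
    Metabolic R B ↔
      ∃ (n : ℕ) (G : Fin n → Matrix (Fin 2) (Fin 2) R),
        (∀ i, (G i).IsSymm) ∧ (∀ i, IsUnit (G i).det) ∧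
        (∀ i, ∃ x : Fin 2 → R, Unimodular R x ∧ ∑ a, ∑ b, G i a b * x a * x b = 0) ∧
        ∃ e : M ≃ₗ[R] (Fin n × Fin 2 → R),
          ∀ v w : M, B v w = ∑ i, ∑ a, ∑ b, G i a b * e v (i, a) * e w (i, b) := by
  simp only [← toBilin'_apply_eq_sum]
  constructor
  · intro h
    obtain ⟨n, s, e, he⟩ := h.exists_hyperbolic_blocks hsymm
    refine ⟨n, fun i => !![0, 1; 1, s i], fun i => ?_, fun i => ?_,
      fun i => ⟨Pi.single 0 1, unimodular_of_dual_apply_eq_one (LinearMap.proj 0) (by simp),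
        by simp⟩, e, he⟩
    · exact Matrix.IsSymm.ext fun a b => by fin_cases a <;> fin_cases b <;> rfl
    · simp [det_fin_two_of]
  · rintro ⟨n, G, hGs, hGdet, hGx, e, he⟩
    choose x hx hxx using hGx
    choose z hxz using fun i => exists_toBilin'_apply_eq_one (hGdet i) (hx i)
    have hzx : ∀ i, toBilin' (G i) (z i) (x i) = 1 := fun i =>
      ((isSymm_toBilin'_iff_isSymm.2 (hGs i)).eq _ _).trans (hxz i)
    exact metabolic_of_blocks he hxx hzx fun i u hu =>
      mem_span_singleton_of_toBilin'_apply_eq_zero (hxx i) (hxz i) (hzx i) hu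

/-- Over a PID, a non-degenerate symmetric bilinear form on a finitely
generated free module is metabolic iff it is isometric to an orthogonal direct sum of
rank-2 non-degenerate symmetric forms, each possessing a unimodular isotropic vector. -/
theorem stmt_7 (R : Type*) [CommRing R] [IsDomain R] [IsPrincipalIdealRing R]
    (M : Type*) [AddCommGroup M] [Module R M] [Module.Free R M] [Module.Finite R M]
    (B : LinearMap.BilinForm R M) (hsymm : B.IsSymm)
    (hnd : Function.Bijective fun v : M => B v) :
    Metabolic R B ↔
      ∃ (n : ℕ) (G : Fin n → Matrix (Fin 2) (Fin 2) R),
        (∀ i, (G i).IsSymm) ∧ (∀ i, IsUnit (G i).det) ∧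
        (∀ i, ∃ x : Fin 2 → R, Unimodular R x ∧ ∑ a, ∑ b, G i a b * x a * x b = 0) ∧
        ∃ e : M ≃ₗ[R] (Fin n × Fin 2 → R),
          ∀ v w : M, B v w = ∑ i, ∑ a, ∑ b, G i a b * e v (i, a) * e w (i, b) :=
  stmt_7_general R M B hsymm
end

section
/- Let R be a principal ideal domain satisfying: for each r ∈ R, either r² ≡ 0 (mod 2) or r² ≡ u² (mod 2) for some unit u. If θ(r) ≅ θ(s) as symmetric bilinear forms (Gram matrices [[0,1],[1,r]] and [[0,1],[1,s]]), then either there is a unit u with r ≡ u²s (mod 2), or both r ≡ 0 and s ≡ 0 (mod 2). -/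
/-- The symmetric bilinear form `θ(r)` on `R²` with Gram matrix `[[0,1],[1,r]]`. -/
def theta (R : Type*) [CommRing R] (r : R) : (Fin 2 → R) → (Fin 2 → R) → R :=
  fun v w => v 0 * w 1 + v 1 * w 0 + r * v 1 * w 1

/-- Over a PID satisfying the square condition mod 2, if `θ(r) ≅ θ(s)`
then either `r ≡ u²s (mod 2)` for some unit `u`, or `r ≡ 0 ≡ s (mod 2)`. -/
theorem stmt_10 (R : Type*) [CommRing R] [IsDomain R] [IsPrincipalIdealRing R]
    (hsq : ∀ r : R, r ^ 2 ∈ Ideal.span {(2 : R)} ∨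
      ∃ u : Rˣ, r ^ 2 - (u : R) ^ 2 ∈ Ideal.span {(2 : R)})
    (r s : R)
    (h : ∃ e : (Fin 2 → R) ≃ₗ[R] (Fin 2 → R),
      ∀ x y, theta R s (e x) (e y) = theta R r x y) :
    (∃ u : Rˣ, r - (u : R) ^ 2 * s ∈ Ideal.span {(2 : R)}) ∨
      (r ∈ Ideal.span {(2 : R)} ∧ s ∈ Ideal.span {(2 : R)}) := by
  obtain ⟨e, he⟩ := h
  set v : Fin 2 → R := ![0, 1] with hv
  have h1 : r = 2 * (e v 0 * e v 1) + s * (e v 1) ^ 2 := by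
    have := he v v
    simp [theta, hv] at this
    rw [← this]; ring
  have h2 : s = 2 * (e.symm v 0 * e.symm v 1) + r * (e.symm v 1) ^ 2 := by
    have := he (e.symm v) (e.symm v)
    simp only [LinearEquiv.apply_symm_apply] at this
    rw [show theta R s v v = s by simp [theta, hv]] at this
    rw [this]; simp [theta, hv]; ring
  simp only [Ideal.mem_span_singleton] at *
  rcases hsq (e v 1) with hb | ⟨u, hu⟩
  · right
    have hr : (2 : R) ∣ r := by
      rw [h1]; exact dvd_add (Dvd.intro _ rfl) (Dvd.dvd.mul_left hb s)
    exact ⟨hr, by rw [h2]; exact dvd_add (Dvd.intro _ rfl) (hr.mul_right _)⟩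
  · left
    refine ⟨u, ?_⟩
    have : r - (u : R) ^ 2 * s = 2 * (e v 0 * e v 1) + s * ((e v 1) ^ 2 - (u : R) ^ 2) := by
      rw [h1]; ring
    rw [this]
    exact dvd_add (Dvd.intro _ rfl) (hu.mul_left s)
end

section
/- Let R be a commutative ring and r, s ∈ R. The orthogonal direct sum θ(r) ⊕ θ(r+s) is isometric to θ(r) ⊕ θ(s). Explicitly, the map sending ((x₁,x₂),(y₁,y₂)) to ((x₁, x₂+y₂),(y₁ - x₁ - r x₂, y₂)) is an isometry. -/
/-- `θ(r) ⊕ θ(r+s)` is isometric to `θ(r) ⊕ θ(s)`, explicitly via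
`((x₁,x₂),(y₁,y₂)) ↦ ((x₁, x₂+y₂), (y₁ - x₁ - r x₂, y₂))`. -/
theorem stmt_13 (R : Type*) [CommRing R] (r s : R) :
    ∃ e : ((Fin 2 → R) × (Fin 2 → R)) ≃ₗ[R] ((Fin 2 → R) × (Fin 2 → R)),
      (∀ p : (Fin 2 → R) × (Fin 2 → R),
        e p = (![p.1 0, p.1 1 + p.2 1], ![p.2 0 - p.1 0 - r * p.1 1, p.2 1])) ∧
      ∀ p q : (Fin 2 → R) × (Fin 2 → R),
        theta R r (e p).1 (e q).1 + theta R s (e p).2 (e q).2 =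
          theta R r p.1 q.1 + theta R (r + s) p.2 q.2 := by
  refine ⟨{
    toFun := fun p => (![p.1 0, p.1 1 + p.2 1], ![p.2 0 - p.1 0 - r * p.1 1, p.2 1]),
    invFun := fun p => (![p.1 0, p.1 1 - p.2 1],
      ![p.2 0 + p.1 0 + r * (p.1 1 - p.2 1), p.2 1]),
    map_add' := by
      intro p q
      refine Prod.ext (funext fun i => ?_) (funext fun i => ?_) <;>
        fin_cases i <;> simp [Pi.add_apply] <;> ring
    map_smul' := by
      intro c p
      refine Prod.ext (funext fun i => ?_) (funext fun i => ?_) <;>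
        fin_cases i <;> simp [Pi.smul_apply, smul_eq_mul] <;> ring
    left_inv := by
      intro p
      refine Prod.ext (funext fun i => ?_) (funext fun i => ?_) <;>
        fin_cases i <;> simp <;> ring
    right_inv := by
      intro p
      refine Prod.ext (funext fun i => ?_) (funext fun i => ?_) <;>
        fin_cases i <;> simp <;> ring }, fun p => rfl, ?_⟩
  intro p q
  simp only [theta, LinearEquiv.coe_mk]
  simp [Matrix.cons_val_zero, Matrix.cons_val_one]
  ring
end

section
/- Let R be a principal ideal domain satisfying: for each r ∈ R, r² ≡ 0 (mod 2) or r² ≡ u² (mod 2) for some unit u. Given r₁, ..., r_n ∈ R, the parity P(⊕ᵢ θ(rᵢ)) of the form ⊕ᵢ₌₁ⁿ θ(rᵢ) equals the image in R/(2) of the set {∑ᵢ uᵢ² rᵢ : each uᵢ ∈ R× ∪ {0}}. -/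
/-- The parity of a form: the image of the set of its diagonal values in `R/(2)`. -/
def parityOf (R : Type*) [CommRing R] {M : Type*} (q : M → M → R) :
    Set (R ⧸ Ideal.span {(2 : R)}) :=
  {c | ∃ x : M, Ideal.Quotient.mk (Ideal.span {(2 : R)}) (q x x) = c}

/-- Over a PID satisfying the square condition mod 2, the parity of
`⊕ᵢ θ(rᵢ)` equals the image in `R/(2)` of `{∑ᵢ uᵢ² rᵢ : uᵢ ∈ R^× ∪ {0}}`. -/
theorem stmt_14 (R : Type*) [CommRing R] [IsDomain R] [IsPrincipalIdealRing R]
    (hsq : ∀ r : R, r ^ 2 ∈ Ideal.span {(2 : R)} ∨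
      ∃ u : Rˣ, r ^ 2 - (u : R) ^ 2 ∈ Ideal.span {(2 : R)})
    (n : ℕ) (r : Fin n → R) :
    parityOf R (fun x y : Fin n → Fin 2 → R => ∑ i, theta R (r i) (x i) (y i)) =
      {c | ∃ u : Fin n → R, (∀ i, u i = 0 ∨ IsUnit (u i)) ∧
        Ideal.Quotient.mk (Ideal.span {(2 : R)}) (∑ i, u i ^ 2 * r i) = c} := by
  ext c
  simp only [parityOf, theta, Set.mem_setOf_eq]
  constructor
  · rintro ⟨x, rfl⟩
    have h : ∀ i, ∃ v : R, (v = 0 ∨ IsUnit v) ∧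
        (x i 1) ^ 2 - v ^ 2 ∈ Ideal.span {(2 : R)} := by
      intro i
      rcases hsq (x i 1) with h | ⟨w, hw⟩
      · exact ⟨0, Or.inl rfl, by simpa using h⟩
      · exact ⟨w, Or.inr w.isUnit, hw⟩
    choose u hu1 hu2 using h
    refine ⟨u, hu1, ?_⟩
    rw [Ideal.Quotient.eq, ← Finset.sum_sub_distrib]
    refine Ideal.sum_mem _ fun i _ => ?_
    have : u i ^ 2 * r i -
        (x i 0 * x i 1 + x i 1 * x i 0 + r i * x i 1 * x i 1) =
        (-2) * (x i 0 * x i 1) + (-(r i)) * ((x i 1) ^ 2 - u i ^ 2) := by ring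
    rw [this]
    exact Ideal.add_mem _
      (Ideal.mul_mem_right _ _ (neg_mem (Ideal.mem_span_singleton_self 2)))
      (Ideal.mul_mem_left _ _ (hu2 i))
  · rintro ⟨u, hu, rfl⟩
    refine ⟨fun i => ![0, u i], ?_⟩
    congr 1
    refine Finset.sum_congr rfl fun i _ => ?_
    simp [Matrix.cons_val_zero, Matrix.cons_val_one]
    ring
end

section
/- Let S be the ring of integers of ℚ(√37), and let α = (1+√37)/2 ∈ S. Then the rank-2 forms over S with Gram matrices [[0,1],[1,1]] and [[0,1],[1,α]] are not isometric, even though both have the same rank and the same parity. (Key step: if they were isometric there would exist x₁, x₂ ∈ S with 2x₁x₂ + α x₂² = 1, forcing x₂ to be a unit; since every unit of S is ±(6+√37)^k and hence congruent to 1 mod 2, reducing mod 2 gives α ≡ 1 (mod 2), a contradiction.) -/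
open Polynomial

/-- The ring of integers `S = ℤ[α]` of `ℚ(√37)`, with `α = (1+√37)/2` satisfying
`α² - α - 9 = 0`. -/
noncomputable abbrev S37 : Type :=
  AdjoinRoot ((X ^ 2 - X - C 9) : Polynomial ℤ)

/-- The element `α = (1+√37)/2` of `S37`. -/
noncomputable abbrev alpha37 : S37 := AdjoinRoot.root _

/-!
If the two forms were isometric, the image `(p, q)` of the second basis vector would satisfy
`2pq + αq² = 1`, so `q` is a unit. A unit `a + bα` has norm `a² + ab - 9b² = ±1`, i.e.
`(2a + b)² - 37b² = ±4`, and this has no solution with `b` odd: multiplying by `6 - √37`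
gives an infinite descent in `|b|`. So `q = a + bα` with `b` even, and reducing
`2pq + αq² = 1` modulo `2` gives `α a² ≡ 1`, impossible since `1, α` is a `ℤ`-basis of `S`.

For the parities: `θ(r)(v, v) ≡ r v₁² (mod 2)`, squaring is surjective on `S/(2) ≅ 𝔽₄`,
and both `1` and `α` are units mod `2`, so both parities are all of `S/(2)`.
-/

theorem Int.sq_sub_37_mul_sq_ne_four_mul_unit {x y e : ℤ} (hy : Odd y) (he : IsUnit e) :
    x ^ 2 - 37 * y ^ 2 ≠ 4 * e := by
  induction hn : y.natAbs using Nat.strong_induction_on generalizing x y e with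
  | _ n ih =>
  intro hxy
  have hYn : |y| = n := by rw [← hn, Int.natCast_natAbs]
  rw [← sq_abs x, ← sq_abs y] at hxy
  set X := |x|
  set Y := |y|
  have hX0 : 0 ≤ X := abs_nonneg x
  have hY : Odd Y := odd_abs.2 hy
  have hY1 : 1 ≤ Y := by obtain ⟨k, hk⟩ := hY; omega
  have hX : Odd X := by
    rw [← Int.odd_pow' two_ne_zero, show X ^ 2 = 37 * Y ^ 2 + 4 * e by linarith]
    exact ((by decide : Odd (37 : ℤ)).mul hY.pow).add_even
      ((by decide : Even (4 : ℤ)).mul_right e)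
  have he_pm : e = 1 ∨ e = -1 := Int.isUnit_iff.1 he
  have hlow : 5 * Y < X := by rcases he_pm with rfl | rfl <;> nlinarith
  have hup : X < 7 * Y := by rcases he_pm with rfl | rfl <;> nlinarith
  -- `(X + Y√37)(6 - √37) = (6X - 37Y) + (X - 6Y)√37`, and `|X - 6Y| < Y`
  refine ih (X - 6 * Y).natAbs (by omega) (x := 6 * X - 37 * Y) (e := -e)
    (hX.sub_even ((by decide : Even (6 : ℤ)).mul_right Y)) he.neg rfl ?_
  linear_combination -hxy

theorem theta_self {R : Type*} [CommRing R] (r : R) (v : Fin 2 → R) :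
    theta R r v v = 2 * (v 0 * v 1) + r * v 1 ^ 2 := by
  unfold theta
  ring

theorem parityOf_theta_eq_univ {R : Type*} [CommRing R] {r : R}
    (hr : IsUnit (Ideal.Quotient.mk (Ideal.span {2}) r))
    (hsq : Function.Surjective fun x : R ⧸ Ideal.span {(2 : R)} => x ^ 2) :
    parityOf R (theta R r) = Set.univ := by
  refine Set.eq_univ_of_forall fun c => ?_
  obtain ⟨x, hx⟩ := hsq (↑hr.unit⁻¹ * c)
  obtain ⟨t, rfl⟩ := Ideal.Quotient.mk_surjective x
  refine ⟨![0, t], ?_⟩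
  simp only [theta_self, Matrix.cons_val_zero, Matrix.cons_val_one, zero_mul, mul_zero, zero_add,
    map_mul, map_pow]
  dsimp only at hx
  rw [hx, ← mul_assoc, IsUnit.mul_val_inv, one_mul]

namespace S37

theorem monic_X_sq_sub_X_sub_nine : (X ^ 2 - X - C 9 : ℤ[X]).Monic := by monicity!

theorem natDegree_X_sq_sub_X_sub_nine : (X ^ 2 - X - C 9 : ℤ[X]).natDegree = 2 := by
  compute_degree!

theorem alpha37_sq : alpha37 ^ 2 = alpha37 + 9 := by
  have h := AdjoinRoot.eval₂_root (X ^ 2 - X - C 9 : ℤ[X])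
  simp only [eval₂_sub, eval₂_pow, eval₂_X, eval₂_ofNat, map_ofNat] at h
  linear_combination h

noncomputable def basis : Module.Basis (Fin 2) ℤ S37 :=
  (AdjoinRoot.powerBasis' monic_X_sq_sub_X_sub_nine).basis.reindex
    (finCongr natDegree_X_sq_sub_X_sub_nine)

theorem coe_basis : ⇑basis = ![1, alpha37] := by
  ext i
  fin_cases i <;> simp only [basis, Module.Basis.reindex_apply, PowerBasis.basis_eq_pow]
  exacts [pow_zero _, pow_one _]

theorem exists_eq_intCast_add_mul_alpha37 (s : S37) : ∃ a b : ℤ, s = a + b * alpha37 := by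
  refine ⟨basis.repr s 0, basis.repr s 1, ?_⟩
  simpa [Fin.sum_univ_two, coe_basis, zsmul_eq_mul] using (basis.sum_repr s).symm

theorem intCast_add_mul_alpha37_inj {a b c d : ℤ}
    (h : (a : S37) + b * alpha37 = c + d * alpha37) : a = c ∧ b = d := by
  have hli := coe_basis ▸ basis.linearIndependent
  have := LinearIndependent.pair_iff.1 hli (a - c) (b - d) (by
    simp only [zsmul_eq_mul]; push_cast; linear_combination h)
  omega

theorem even_of_intCast_add_mul_alpha37_mem_span_two {a b : ℤ}
    (h : (a : S37) + b * alpha37 ∈ Ideal.span {2}) : Even a ∧ Even b := by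
  obtain ⟨z, hz⟩ := Ideal.mem_span_singleton'.1 h
  obtain ⟨c, d, rfl⟩ := exists_eq_intCast_add_mul_alpha37 z
  obtain ⟨rfl, rfl⟩ : c * 2 = a ∧ d * 2 = b := by
    refine intCast_add_mul_alpha37_inj ?_
    push_cast
    linear_combination hz
  exact ⟨⟨c, by ring⟩, ⟨d, by ring⟩⟩

theorem even_of_isUnit_intCast_add_mul_alpha37 {a b : ℤ}
    (h : IsUnit ((a : S37) + b * alpha37)) : Even b := by
  obtain ⟨v, hv⟩ := isUnit_iff_exists_inv.1 h
  obtain ⟨c, d, rfl⟩ := exists_eq_intCast_add_mul_alpha37 v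
  obtain ⟨h0, h1⟩ : a * c + 9 * b * d = 1 ∧ a * d + b * c + b * d = 0 := by
    refine intCast_add_mul_alpha37_inj ?_
    push_cast
    linear_combination hv - b * d * alpha37_sq
  -- multiplicativity of the norm `a² + ab - 9b²`
  have hnorm : (a ^ 2 + a * b - 9 * b ^ 2) * (c ^ 2 + c * d - 9 * d ^ 2) = 1 := by
    linear_combination (a * c + 9 * b * d + 1) * h0 +
      (a * c + 9 * b * d - 9 * (a * d + b * c + b * d)) * h1
  by_contra hb
  exact Int.sq_sub_37_mul_sq_ne_four_mul_unit (x := 2 * a + b) (Int.not_even_iff_odd.1 hb)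
    (IsUnit.of_mul_eq_one _ hnorm) (by ring)

section QuotientTwo

local notation "Q" => S37 ⧸ Ideal.span {(2 : S37)}

theorem quot_two_eq_zero : (2 : Q) = 0 :=
  Ideal.Quotient.eq_zero_iff_mem.2 (Ideal.mem_span_singleton_self 2)

theorem quot_intCast_sq (n : ℤ) : (n : Q) ^ 2 = n := by
  obtain ⟨k, hk⟩ := Int.even_mul_pred_self n
  have : ((n * (n - 1) : ℤ) : Q) = 0 := by
    rw [hk]
    push_cast
    linear_combination (k : Q) * quot_two_eq_zero
  push_cast at this
  linear_combination this

theorem quot_mk_alpha37_sq :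
    Ideal.Quotient.mk _ alpha37 ^ 2 = Ideal.Quotient.mk (Ideal.span {(2 : S37)}) alpha37 + 1 := by
  simp only [← map_pow, alpha37_sq, map_add, map_ofNat]
  linear_combination 4 * quot_two_eq_zero

theorem isUnit_quot_mk_alpha37 : IsUnit (Ideal.Quotient.mk (Ideal.span {(2 : S37)}) alpha37) :=
  IsUnit.of_mul_eq_one (Ideal.Quotient.mk _ alpha37 - 1) (by linear_combination quot_mk_alpha37_sq)

theorem quot_sq_surjective : Function.Surjective fun x : Q => x ^ 2 := by
  intro y
  obtain ⟨s, rfl⟩ := Ideal.Quotient.mk_surjective y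
  obtain ⟨a, b, rfl⟩ := exists_eq_intCast_add_mul_alpha37 s
  have hab := quot_intCast_sq (a - b)
  push_cast at hab
  set α := Ideal.Quotient.mk (Ideal.span {(2 : S37)}) alpha37
  -- squaring is additive mod `2` and fixes integers, so `((a - b) + bα)² = (a - b) + b(α + 1)`
  refine ⟨(a - b) + b * α, ?_⟩
  simp only [map_add, map_mul, map_intCast]
  linear_combination hab + (b : Q) ^ 2 * quot_mk_alpha37_sq + (α + 1) * quot_intCast_sq b +
    (a - b) * b * α * quot_two_eq_zero

end QuotientTwo

end S37

/-- Over the ring of integers `S` of `ℚ(√37)`, the rank-2 forms with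
Gram matrices `[[0,1],[1,1]]` and `[[0,1],[1,α]]` have the same rank and parity yet
are not isometric. -/
theorem stmt_16 :
    parityOf S37 (theta S37 1) = parityOf S37 (theta S37 alpha37) ∧
    ¬ ∃ e : (Fin 2 → S37) ≃ₗ[S37] (Fin 2 → S37),
        ∀ x y, theta S37 alpha37 (e x) (e y) = theta S37 1 x y := by
  refine ⟨by rw [parityOf_theta_eq_univ (by simp) S37.quot_sq_surjective,
    parityOf_theta_eq_univ S37.isUnit_quot_mk_alpha37 S37.quot_sq_surjective], ?_⟩
  rintro ⟨e, he⟩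
  have h1 := he ![0, 1] ![0, 1]
  simp only [theta_self, Matrix.cons_val_zero, Matrix.cons_val_one, mul_zero, one_pow, mul_one,
    zero_add] at h1
  generalize e ![0, 1] 0 = p, e ![0, 1] 1 = q at h1
  have hq : IsUnit q := IsUnit.of_mul_eq_one (2 * p + alpha37 * q) (by linear_combination h1)
  obtain ⟨a, b, rfl⟩ := S37.exists_eq_intCast_add_mul_alpha37 q
  obtain ⟨m, rfl⟩ := S37.even_of_isUnit_intCast_add_mul_alpha37 hq
  have hmod : ((-1 : ℤ) : S37) + (a ^ 2 : ℤ) * alpha37 ∈ Ideal.span {2} := by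
    refine Ideal.mem_span_singleton'.2 ⟨-(p * (a + (m + m : ℤ) * alpha37) +
      2 * a * m * alpha37 ^ 2 + 2 * m ^ 2 * alpha37 ^ 3), ?_⟩
    push_cast at h1 ⊢
    linear_combination -h1
  exact absurd (S37.even_of_intCast_add_mul_alpha37_mem_span_two hmod).1 (by decide)
end
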